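/- Let n ≥ 1 be an integer and let x₁, …, x_n : ℝ → ℝ be differentiable functions; extend them by x_{−1} = x₀ = x_{n+1} = x_{n+2} := 0. Suppose that for every k with 1 ≤ k ≤ n and every t ∈ ℝ one has x_k′(t) = −d⁻_k·x_{k−2}(t) + (d⁻_k − d⁻_{k+2})·x_k(t) + d⁻_{k+2}·x_{k+2}(t), where d⁻_j := (j+2)²·(j−2)/(4j²). Then for every t ∈ ℝ, (d/dt)(∑_{k=1}^{n} x_k(t)²) ≤ −∑_{k=1}^{n} x_k(t)². -/

import Mathlib

/-- The tridiagonal coefficient `d⁻_j = (j+2)²·(j−2)/(4j²)` (integer index). -/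
noncomputable def dMinus (j : ℤ) : ℝ :=
  ((j : ℝ) + 2) ^ 2 * ((j : ℝ) - 2) / (4 * (j : ℝ) ^ 2)

/-!
Multiplying the `k`-th equation by `2 x_k` and summing, the off-diagonal terms
`2 d⁻_{k+2} x_k x_{k+2} - 2 d⁻_k x_{k-2} x_k` telescope (with step `2`) and vanish thanks to the
boundary conditions, leaving `∑ 2 (d⁻_k - d⁻_{k+2}) x_k²`. Since
`d⁻_k - d⁻_{k+2} = -1/2 - 2 (k² + 6k + 4) / (k² (k+2)²) ≤ -1/2` for `k ≥ 1`, this is at most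
`-∑ x_k²`.
-/

open Finset

theorem Finset.sum_Icc_one_sub_shift_two {M : Type*} [AddCommGroup M] (g : ℤ → M) (n : ℕ) :
    ∑ k ∈ Icc (1 : ℤ) n, (g (k + 2) - g k) = g (n + 1) + g (n + 2) - g 1 - g 2 := by
  induction n with
  | zero => simp
  | succ n ih =>
    rw [Nat.cast_succ, ← insert_Icc_right_eq_Icc_add_one (by omega),
      sum_insert (by simp), ih]
    rw [show (n : ℤ) + 1 + 2 = n + 3 by ring, show (n : ℤ) + 1 + 1 = n + 2 by ring]
    abel

theorem sum_two_mul_tridiagonal_eq {n : ℕ} (d y : ℤ → ℝ) (hm1 : y (-1) = 0) (h0 : y 0 = 0)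
    (hn1 : y ((n : ℤ) + 1) = 0) (hn2 : y ((n : ℤ) + 2) = 0) :
    ∑ k ∈ Icc (1 : ℤ) n,
        2 * y k * (-(d k) * y (k - 2) + (d k - d (k + 2)) * y k + d (k + 2) * y (k + 2)) =
      ∑ k ∈ Icc (1 : ℤ) n, 2 * (d k - d (k + 2)) * y k ^ 2 := by
  set g : ℤ → ℝ := fun k => 2 * d k * y (k - 2) * y k
  have hsplit : ∀ k : ℤ,
      2 * y k * (-(d k) * y (k - 2) + (d k - d (k + 2)) * y k + d (k + 2) * y (k + 2)) =
        (g (k + 2) - g k) + 2 * (d k - d (k + 2)) * y k ^ 2 := by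
    intro k
    simp only [g, add_sub_cancel_right]
    ring
  have hcross : ∑ k ∈ Icc (1 : ℤ) n, (g (k + 2) - g k) = 0 := by
    rw [sum_Icc_one_sub_shift_two]
    simp [g, hm1, h0, hn1, hn2]
  simp only [hsplit, sum_add_distrib, hcross, zero_add]

theorem dMinus_sub_dMinus_add_two_le {k : ℤ} (hk : 1 ≤ k) :
    dMinus k - dMinus (k + 2) ≤ -(1 / 2) := by
  have hk' : (1 : ℝ) ≤ k := by exact_mod_cast hk
  have key : dMinus k - dMinus (k + 2) =
      -(1 / 2) - 2 * ((k : ℝ) ^ 2 + 6 * k + 4) / ((k : ℝ) ^ 2 * ((k : ℝ) + 2) ^ 2) := by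
    unfold dMinus
    push_cast
    field_simp
    ring
  rw [key, sub_le_self_iff]
  positivity

theorem hasDerivAt_sum_sq {ι : Type*} (s : Finset ι) {f : ι → ℝ → ℝ} {f' : ι → ℝ} {t : ℝ}
    (hf : ∀ i ∈ s, HasDerivAt (f i) (f' i) t) :
    HasDerivAt (fun u => ∑ i ∈ s, f i u ^ 2) (∑ i ∈ s, 2 * f i t * f' i) t :=
  HasDerivAt.fun_sum fun i hi => by simpa using (hf i hi).fun_pow 2

theorem galerkin_decay_minus_general
    (n : ℕ)
    (x : ℤ → ℝ → ℝ)
    (hxm1 : ∀ t, x (-1) t = 0)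
    (hx0 : ∀ t, x 0 t = 0)
    (hxn1 : ∀ t, x ((n : ℤ) + 1) t = 0)
    (hxn2 : ∀ t, x ((n : ℤ) + 2) t = 0)
    (hODE : ∀ k : ℤ, 1 ≤ k → k ≤ (n : ℤ) → ∀ t : ℝ,
      HasDerivAt (x k)
        (-(dMinus k) * x (k - 2) t + (dMinus k - dMinus (k + 2)) * x k t +
          dMinus (k + 2) * x (k + 2) t) t) :
    ∀ t : ℝ,
      deriv (fun s => ∑ k ∈ Finset.Icc (1 : ℤ) (n : ℤ), x k s ^ 2) t ≤
        -∑ k ∈ Finset.Icc (1 : ℤ) (n : ℤ), x k t ^ 2 := by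
  intro t
  have hderiv := hasDerivAt_sum_sq (Icc (1 : ℤ) n) fun k hk =>
    hODE k (mem_Icc.1 hk).1 (mem_Icc.1 hk).2 t
  rw [hderiv.deriv, sum_two_mul_tridiagonal_eq dMinus (fun k => x k t) (hxm1 t) (hx0 t)
    (hxn1 t) (hxn2 t), ← sum_neg_distrib]
  refine sum_le_sum fun k hk => ?_
  have hgap := dMinus_sub_dMinus_add_two_le (mem_Icc.1 hk).1
  nlinarith [sq_nonneg (x k t)]

/-- Galerkin version of the exponential decay of the linearized `η⁻`-evolution: if
`x_k′ = −d⁻_k x_{k−2} + (d⁻_k − d⁻_{k+2}) x_k + d⁻_{k+2} x_{k+2}` for `1 ≤ k ≤ n`,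
with `x_{−1} = x₀ = x_{n+1} = x_{n+2} = 0`, then
`(d/dt) ∑_{k=1}^n x_k² ≤ −∑_{k=1}^n x_k²`. -/
theorem galerkin_decay_minus
    (n : ℕ) (hn : 1 ≤ n)
    (x : ℤ → ℝ → ℝ)
    (hxm1 : ∀ t, x (-1) t = 0)
    (hx0 : ∀ t, x 0 t = 0)
    (hxn1 : ∀ t, x ((n : ℤ) + 1) t = 0)
    (hxn2 : ∀ t, x ((n : ℤ) + 2) t = 0)
    (hODE : ∀ k : ℤ, 1 ≤ k → k ≤ (n : ℤ) → ∀ t : ℝ,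
      HasDerivAt (x k)
        (-(dMinus k) * x (k - 2) t + (dMinus k - dMinus (k + 2)) * x k t +
          dMinus (k + 2) * x (k + 2) t) t) :
    ∀ t : ℝ,
      deriv (fun s => ∑ k ∈ Finset.Icc (1 : ℤ) (n : ℤ), x k s ^ 2) t ≤
        -∑ k ∈ Finset.Icc (1 : ℤ) (n : ℤ), x k t ^ 2 :=
  galerkin_decay_minus_general n x hxm1 hx0 hxn1 hxn2 hODE
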